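/- If G = (G^{(j)}_{(1)1}) is a spatial semispray on J¹(ℝ,M), i.e. its components transform by 2G̃^{(k)} = 2G^{(j)}(dt/dt̃)²(∂x̃^k/∂x^j) − (∂x^m/∂x̃^j)(∂x̃₁^k/∂x^m) x̃₁^j, then the components N^{(j)}_{(1)k} := ∂G^{(j)}_{(1)1}/∂x₁^k transform as the spatial components of a nonlinear connection: Ñ^{(k)}_{(1)l} = N^{(j)}_{(1)i}(dt/dt̃)(∂x^i/∂x̃^l)(∂x̃^k/∂x^j) − (∂x^m/∂x̃^l)(∂x̃₁^k/∂x^m). -/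

import Mathlib

noncomputable section

/-- Partial derivative of `f` with respect to the `j`-th coordinate at `x`. -/
def pd {n : ℕ} (f : (Fin n → ℝ) → ℝ) (x : Fin n → ℝ) (j : Fin n) : ℝ :=
  deriv (fun s => f (Function.update x j s)) (x j)

/-- Jacobian `∂x̃^k/∂x^j` of the spatial change of coordinates `φ` (with `x̃ = φ x`). -/
def Jac {n : ℕ} (φ : (Fin n → ℝ) → (Fin n → ℝ)) (x : Fin n → ℝ) (k j : Fin n) : ℝ :=
  pd (fun y => φ y k) x j

/-- `dt/dt̃`, expressed at the old time `t` (with `t̃ = a t`). -/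
def dtdT (a : ℝ → ℝ) (t : ℝ) : ℝ := (deriv a t)⁻¹

/-- The induced fibre coordinate `x̃₁^k = (∂x̃^k/∂x^j)(dt/dt̃) x₁^j`. -/
def fib {n : ℕ} (a : ℝ → ℝ) (φ : (Fin n → ℝ) → (Fin n → ℝ))
    (t : ℝ) (x v : Fin n → ℝ) (k : Fin n) : ℝ :=
  (∑ j, Jac φ x k j * v j) * dtdT a t

/-- A (global) smooth diffeomorphic change of coordinates `t̃ = a t`, `x̃ = φ x`,
with inverse maps `b` and `ψ`. -/
def IsCoordChange (n : ℕ) (a b : ℝ → ℝ) (φ ψ : (Fin n → ℝ) → (Fin n → ℝ)) : Prop :=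
  ContDiff ℝ (⊤ : ℕ∞) a ∧ ContDiff ℝ (⊤ : ℕ∞) b ∧ (∀ t, b (a t) = t) ∧ (∀ s, a (b s) = s) ∧
    (∀ t, deriv a t ≠ 0) ∧ ContDiff ℝ (⊤ : ℕ∞) φ ∧ ContDiff ℝ (⊤ : ℕ∞) ψ ∧
    (∀ x, ψ (φ x) = x) ∧ (∀ y, φ (ψ y) = y)

/-- Smoothness of a local object on the 1-jet space. -/
def SmoothJet {n : ℕ} (G : ℝ → (Fin n → ℝ) → (Fin n → ℝ) → Fin n → ℝ) : Prop :=
  ContDiff ℝ (⊤ : ℕ∞) (fun p : ℝ × (Fin n → ℝ) × (Fin n → ℝ) => G p.1 p.2.1 p.2.2)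

/-- The common transformation law of temporal semisprays (`c = 2`) and of the
temporal components of nonlinear connections (`c = 1`):
`c·H̃^{(k)} = c·H^{(j)} (dt/dt̃)² ∂x̃^k/∂x^j − (dt/dt̃) ∂x̃₁^k/∂t`. -/
def TemporalLaw {n : ℕ} (a : ℝ → ℝ) (φ : (Fin n → ℝ) → (Fin n → ℝ)) (c : ℝ)
    (H Ht : ℝ → (Fin n → ℝ) → (Fin n → ℝ) → Fin n → ℝ) : Prop :=
  ∀ t x v k, c * Ht (a t) (φ x) (fib a φ t x v) k =
    c * (∑ j, H t x v j * (dtdT a t) ^ 2 * Jac φ x k j)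
      - dtdT a t * deriv (fun s => fib a φ s x v k) t

/-- The spatial semispray transformation law:
`2G̃^{(k)} = 2G^{(j)} (dt/dt̃)² ∂x̃^k/∂x^j − (∂x^m/∂x̃^j)(∂x̃₁^k/∂x^m) x̃₁^j`. -/
def SpatialSemisprayLaw {n : ℕ} (a : ℝ → ℝ) (φ ψ : (Fin n → ℝ) → (Fin n → ℝ))
    (G Gt : ℝ → (Fin n → ℝ) → (Fin n → ℝ) → Fin n → ℝ) : Prop :=
  ∀ t x v k, 2 * Gt (a t) (φ x) (fib a φ t x v) k =
    2 * (∑ j, G t x v j * (dtdT a t) ^ 2 * Jac φ x k j)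
      - ∑ j, ∑ m, Jac ψ (φ x) m j * pd (fun y => fib a φ t y v k) x m
          * fib a φ t x v j

/-- The transformation law of the spatial components of a nonlinear connection:
`Ñ^{(k)}_{(1)l} = N^{(j)}_{(1)i} (dt/dt̃)(∂x^i/∂x̃^l)(∂x̃^k/∂x^j) − (∂x^m/∂x̃^l)(∂x̃₁^k/∂x^m)`. -/
def SpatialConnLaw {n : ℕ} (a : ℝ → ℝ) (φ ψ : (Fin n → ℝ) → (Fin n → ℝ))
    (N Nt : ℝ → (Fin n → ℝ) → (Fin n → ℝ) → Fin n → Fin n → ℝ) : Prop :=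
  ∀ t x v k l, Nt (a t) (φ x) (fib a φ t x v) k l =
    (∑ j, ∑ i, N t x v j i * dtdT a t * Jac ψ (φ x) i l * Jac φ x k j)
      - ∑ m, Jac ψ (φ x) m l * pd (fun y => fib a φ t y v k) x m

/-- The SODE transformation law:
`F̃^{(r)} = F^{(j)} (dt/dt̃)² ∂x̃^r/∂x^j − (dt/dt̃) ∂x̃₁^r/∂t − (∂x^m/∂x̃^j)(∂x̃₁^r/∂x^m) x̃₁^j`. -/
def SODELaw {n : ℕ} (a : ℝ → ℝ) (φ ψ : (Fin n → ℝ) → (Fin n → ℝ))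
    (F Ft : ℝ → (Fin n → ℝ) → (Fin n → ℝ) → Fin n → ℝ) : Prop :=
  ∀ t x v k, Ft (a t) (φ x) (fib a φ t x v) k =
    (∑ j, F t x v j * (dtdT a t) ^ 2 * Jac φ x k j)
      - dtdT a t * deriv (fun s => fib a φ s x v k) t
      - ∑ j, ∑ m, Jac ψ (φ x) m j * pd (fun y => fib a φ t y v k) x m
          * fib a φ t x v j

/-- The transformation law of the temporal Christoffel symbol:
`H̃¹₁₁ = H¹₁₁ (dt/dt̃) + (dt̃/dt)(d²t/dt̃²)`. -/
def TemporalChristoffelLaw (a b H Ht : ℝ → ℝ) : Prop :=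
  ∀ t, Ht (a t) = H t * dtdT a t + deriv a t * deriv (deriv b) (a t)


namespace SSaux

variable {n : ℕ}

lemma update_eq (x : Fin n → ℝ) (j : Fin n) (s : ℝ) :
    Function.update x j s = x + (s - x j) • (Pi.single j 1 : Fin n → ℝ) := by
  funext i
  rcases eq_or_ne i j with h | h
  · subst h; simp
  · simp [Function.update_of_ne h, Pi.single_apply, h]

lemma hasDerivAt_update (x : Fin n → ℝ) (j : Fin n) (s₀ : ℝ) :
    HasDerivAt (fun s => Function.update x j s) (Pi.single j 1 : Fin n → ℝ) s₀ := by
  simp only [update_eq x j]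
  have h := ((hasDerivAt_id s₀).sub_const (x j)).smul_const ((Pi.single j 1 : Fin n → ℝ))
  simpa using h.const_add x

lemma hasDerivAt_pd {f : (Fin n → ℝ) → ℝ} {x : Fin n → ℝ} (j : Fin n)
    (hf : DifferentiableAt ℝ f x) :
    HasDerivAt (fun s => f (Function.update x j s)) (fderiv ℝ f x (Pi.single j 1)) (x j) := by
  have hf' : HasFDerivAt f (fderiv ℝ f x) (Function.update x j (x j)) := by
    rw [Function.update_eq_self]; exact hf.hasFDerivAt
  exact hf'.comp_hasDerivAt (x j) (hasDerivAt_update x j (x j))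

lemma pd_eq_fderiv {f : (Fin n → ℝ) → ℝ} {x : Fin n → ℝ} (j : Fin n)
    (hf : DifferentiableAt ℝ f x) :
    pd f x j = fderiv ℝ f x (Pi.single j 1) :=
  (hasDerivAt_pd j hf).deriv

lemma hasDerivAt_pd' {f : (Fin n → ℝ) → ℝ} {x : Fin n → ℝ} (j : Fin n)
    (hf : DifferentiableAt ℝ f x) :
    HasDerivAt (fun s => f (Function.update x j s)) (pd f x j) (x j) := by
  rw [pd_eq_fderiv j hf]; exact hasDerivAt_pd j hf

lemma clm_apply_eq_sum (f' : (Fin n → ℝ) →L[ℝ] ℝ) (w : Fin n → ℝ) :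
    f' w = ∑ j, w j * f' (Pi.single j 1) := by
  conv_lhs => rw [← Finset.univ_sum_single w]
  rw [map_sum]
  refine Finset.sum_congr rfl fun j _ => ?_
  have h : (Pi.single j (w j) : Fin n → ℝ) = w j • (Pi.single j 1 : Fin n → ℝ) := by
    funext i; rcases eq_or_ne i j with h | h <;> simp [Pi.single_apply, h]
  rw [h, map_smul, smul_eq_mul]

lemma hasDerivAt_line {f : (Fin n → ℝ) → ℝ} {v w : Fin n → ℝ}
    (hf : DifferentiableAt ℝ f v) :
    HasDerivAt (fun s : ℝ => f (v + s • w)) (∑ j, w j * pd f v j) 0 := by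
  have hL : HasDerivAt (fun s : ℝ => v + s • w) w 0 := by
    simpa using ((hasDerivAt_id (0:ℝ)).smul_const w).const_add v
  have hf' : HasFDerivAt f (fderiv ℝ f v) ((fun s : ℝ => v + s • w) 0) := by
    simp only [zero_smul, add_zero]; exact hf.hasFDerivAt
  have h := hf'.comp_hasDerivAt 0 hL
  have he : fderiv ℝ f v w = ∑ j, w j * pd f v j := by
    rw [clm_apply_eq_sum]
    exact Finset.sum_congr rfl fun j _ => by rw [pd_eq_fderiv j hf]
  exact he ▸ h

end SSaux

namespace SSaux

variable {n : ℕ}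

lemma comp_slice {φ : (Fin n → ℝ) → (Fin n → ℝ)} (hφ : ContDiff ℝ (⊤ : ℕ∞) φ) (k : Fin n) :
    ContDiff ℝ (⊤ : ℕ∞) (fun y => φ y k) := contDiff_pi.mp hφ k

lemma contDiff_Jfd {φ : (Fin n → ℝ) → (Fin n → ℝ)} (hφ : ContDiff ℝ (⊤ : ℕ∞) φ) (k i : Fin n) :
    ContDiff ℝ (⊤ : ℕ∞) (fun y => fderiv ℝ (fun z => φ z k) y (Pi.single i 1)) :=
  (((comp_slice hφ k).fderiv_right (by simp)).clm_apply contDiff_const)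

lemma Jac_eq {φ : (Fin n → ℝ) → (Fin n → ℝ)} (hφ : ContDiff ℝ (⊤ : ℕ∞) φ)
    (y : Fin n → ℝ) (k i : Fin n) :
    Jac φ y k i = fderiv ℝ (fun z => φ z k) y (Pi.single i 1) :=
  pd_eq_fderiv i (((comp_slice hφ k).differentiable (by simp)) y)

lemma fderiv_slice {Φ : (Fin n → ℝ) → (Fin n → ℝ)} {x : Fin n → ℝ}
    (hΦ : DifferentiableAt ℝ Φ x) (k : Fin n) (u : Fin n → ℝ) :
    fderiv ℝ (fun y => Φ y k) x u = (fderiv ℝ Φ x u) k := by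
  have h : HasFDerivAt (fun y => Φ y k)
      ((ContinuousLinearMap.proj (R := ℝ) (φ := fun _ : Fin n => ℝ) k).comp (fderiv ℝ Φ x)) x :=
    (ContinuousLinearMap.proj (R := ℝ) (φ := fun _ : Fin n => ℝ) k).hasFDerivAt.comp x
      hΦ.hasFDerivAt
  rw [h.fderiv]; rfl

/-- Chain-rule inverse-Jacobian identity. -/
lemma jac_inverse {φ ψ : (Fin n → ℝ) → (Fin n → ℝ)} (hφ : ContDiff ℝ (⊤ : ℕ∞) φ)
    (hψ : ContDiff ℝ (⊤ : ℕ∞) ψ) (hinv : ∀ y, φ (ψ y) = y) (x : Fin n → ℝ) (j l : Fin n) :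
    ∑ i, Jac φ (ψ x) j i * Jac ψ x i l = if j = l then 1 else 0 := by
  have hφd := hφ.differentiable (by simp)
  have hψd := hψ.differentiable (by simp)
  have hcomp : fderiv ℝ (φ ∘ ψ) x = (fderiv ℝ φ (ψ x)).comp (fderiv ℝ ψ x) :=
    fderiv_comp x (hφd _) (hψd _)
  have hid : (φ ∘ ψ) = id := funext hinv
  rw [hid, fderiv_id] at hcomp
  have happ := congrArg (fun L : (Fin n → ℝ) →L[ℝ] (Fin n → ℝ) =>
    L (Pi.single l 1) j) hcomp
  simp only [ContinuousLinearMap.id_apply, ContinuousLinearMap.comp_apply] at happ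
  -- happ : Pi.single l 1 j = fderiv φ (ψ x) (fderiv ψ x (single l 1)) j
  have h1 : (fderiv ℝ φ (ψ x) (fderiv ℝ ψ x (Pi.single l 1))) j
      = ∑ i, Jac ψ x i l * Jac φ (ψ x) j i := by
    rw [← fderiv_slice (hφd _) j]
    rw [clm_apply_eq_sum (fderiv ℝ (fun y => φ y j) (ψ x)) (fderiv ℝ ψ x (Pi.single l 1))]
    refine Finset.sum_congr rfl fun i _ => ?_
    rw [← Jac_eq hφ, ← fderiv_slice (hψd x) i, ← Jac_eq hψ]
  rw [h1] at happ
  rw [show (∑ i, Jac φ (ψ x) j i * Jac ψ x i l)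
      = ∑ i, Jac ψ x i l * Jac φ (ψ x) j i from
    Finset.sum_congr rfl fun i _ => mul_comm _ _, ← happ, Pi.single_apply]

/-- Symmetry of second partials of components of a smooth map. -/
lemma Q_symm {φ : (Fin n → ℝ) → (Fin n → ℝ)} (hφ : ContDiff ℝ (⊤ : ℕ∞) φ)
    (x : Fin n → ℝ) (k m i : Fin n) :
    pd (fun y => Jac φ y k i) x m = pd (fun y => Jac φ y k m) x i := by
  set f := fun z => φ z k with hf
  have hk : ContDiff ℝ (⊤ : ℕ∞) f := comp_slice hφ k
  have hd1 : Differentiable ℝ f := hk.differentiable (by simp)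
  have hd2 : Differentiable ℝ (fderiv ℝ f) := (hk.fderiv_right (m := (⊤ : ℕ∞)) (by simp)).differentiable (by simp)
  have hJ : ∀ u : Fin n, (fun y => Jac φ y k u)
      = fun y => fderiv ℝ f y (Pi.single u 1) := fun u => funext fun y => Jac_eq hφ y k u
  have key : ∀ u w : Fin n, pd (fun y => fderiv ℝ f y (Pi.single u 1)) x w
      = fderiv ℝ (fderiv ℝ f) x (Pi.single w 1) (Pi.single u 1) := by
    intro u w
    have hdiff : DifferentiableAt ℝ (fun y => fderiv ℝ f y (Pi.single u 1)) x :=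
      ((hk.fderiv_right (m := (⊤ : ℕ∞)) (by simp)).clm_apply contDiff_const).differentiable (by simp) x
    rw [pd_eq_fderiv w hdiff]
    have h : HasFDerivAt (fun y => fderiv ℝ f y (Pi.single u 1))
        ((ContinuousLinearMap.apply ℝ ℝ ((Pi.single u 1 : Fin n → ℝ))).comp
          (fderiv ℝ (fderiv ℝ f) x)) x :=
      (ContinuousLinearMap.apply ℝ ℝ ((Pi.single u 1 : Fin n → ℝ))).hasFDerivAt.comp x
        (hd2 x).hasFDerivAt
    rw [h.fderiv]; rfl
  rw [hJ i, hJ m, key, key]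
  exact second_derivative_symmetric (fun y => (hd1 y).hasFDerivAt) (hd2 x).hasFDerivAt _ _

end SSaux

namespace SSaux

variable {n : ℕ}

lemma fib_add_smul (a : ℝ → ℝ) (φ : (Fin n → ℝ) → (Fin n → ℝ)) (t : ℝ)
    (x v w : Fin n → ℝ) (s : ℝ) :
    fib a φ t x (v + s • w) = fib a φ t x v + s • fib a φ t x w := by
  funext j
  have h : ∑ i, Jac φ x j i * (v i + s * w i)
      = (∑ i, Jac φ x j i * v i) + s * ∑ i, Jac φ x j i * w i := by
    rw [Finset.mul_sum, ← Finset.sum_add_distrib]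
    exact Finset.sum_congr rfl fun i _ => by ring
  simp only [fib, Pi.add_apply, Pi.smul_apply, smul_eq_mul, h]
  ring

/-- Explicit linear formula for the spatial partial of `fib` in the base variable. -/
lemma P_formula {a : ℝ → ℝ} {φ : (Fin n → ℝ) → (Fin n → ℝ)} (hφ : ContDiff ℝ (⊤ : ℕ∞) φ)
    (t : ℝ) (x v : Fin n → ℝ) (k m : Fin n) :
    pd (fun y => fib a φ t y v k) x m
      = (∑ i, pd (fun y => Jac φ y k i) x m * v i) * dtdT a t := by
  have hJ : ∀ i : Fin n, HasDerivAt (fun s => Jac φ (Function.update x m s) k i)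
      (pd (fun y => Jac φ y k i) x m) (x m) := by
    intro i
    have hfun : (fun y => Jac φ y k i)
        = fun y => fderiv ℝ (fun z => φ z k) y (Pi.single i 1) :=
      funext fun y => Jac_eq hφ y k i
    have hdy : DifferentiableAt ℝ (fun y => Jac φ y k i) x := by
      rw [hfun]; exact (contDiff_Jfd hφ k i).differentiable (by simp) x
    exact hasDerivAt_pd' m hdy
  have h := (HasDerivAt.sum (u := Finset.univ)
    (fun i _ => ((hJ i).mul_const (v i)))).mul_const (dtdT a t)
  simpa [pd, fib] using h.deriv

end SSaux

open SSaux

/-- The fibre derivatives `N^{(j)}_{(1)k} = ∂G^{(j)}_{(1)1}/∂x₁^k` of a spatial semispray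
transform as the spatial components of a nonlinear connection. -/
theorem spatial_semispray_induces_connection {n : ℕ}
    (a b : ℝ → ℝ) (φ ψ : (Fin n → ℝ) → (Fin n → ℝ))
    (hcc : IsCoordChange n a b φ ψ)
    (G Gt : ℝ → (Fin n → ℝ) → (Fin n → ℝ) → Fin n → ℝ)
    (hG : SmoothJet G) (hGt : SmoothJet Gt)
    (hlaw : SpatialSemisprayLaw a φ ψ G Gt) :
    SpatialConnLaw a φ ψ
      (fun t x v j i => pd (fun w => G t x w j) v i)
      (fun t x v j i => pd (fun w => Gt t x w j) v i) := by
  obtain ⟨ha, hb, hba, hab, ha', hφ, hψ, hψφ, hφψ⟩ := hcc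
  intro t x v k l
  show pd (fun u => Gt (a t) (φ x) u k) (fib a φ t x v) l
      = (∑ j, ∑ i, pd (fun u => G t x u j) v i * dtdT a t * Jac ψ (φ x) i l * Jac φ x k j)
        - ∑ m, Jac ψ (φ x) m l * pd (fun y => fib a φ t y v k) x m
  have hDne : dtdT a t ≠ 0 := inv_ne_zero (ha' t)
  set dvec : Fin n → ℝ := fun i => Jac ψ (φ x) i l with hdvec
  -- differentiability of slices
  have hGslice : ∀ j : Fin n, Differentiable ℝ (fun u => G t x u j) := by
    intro j
    have h0 : ContDiff ℝ (⊤ : ℕ∞) (fun p : ℝ × (Fin n → ℝ) × (Fin n → ℝ) => G p.1 p.2.1 p.2.2) := hG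
    have h1 : ContDiff ℝ (⊤ : ℕ∞) (fun u : Fin n → ℝ => G t x u) :=
      h0.comp (contDiff_const.prodMk (contDiff_const.prodMk contDiff_id))
    exact (contDiff_pi.mp h1 j).differentiable (by simp)
  have hGtslice : Differentiable ℝ (fun u => Gt (a t) (φ x) u k) := by
    have h0 : ContDiff ℝ (⊤ : ℕ∞) (fun p : ℝ × (Fin n → ℝ) × (Fin n → ℝ) => Gt p.1 p.2.1 p.2.2) := hGt
    have h1 : ContDiff ℝ (⊤ : ℕ∞) (fun u : Fin n → ℝ => Gt (a t) (φ x) u) :=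
      h0.comp (contDiff_const.prodMk (contDiff_const.prodMk contDiff_id))
    exact (contDiff_pi.mp h1 k).differentiable (by simp)
  -- inverse-Jacobian identities
  have hJψJ : ∀ m p : Fin n, ∑ j, Jac ψ (φ x) m j * Jac φ x j p = if m = p then 1 else 0 :=
    fun m p => jac_inverse hψ hφ hψφ x m p
  have hJJψ : ∀ j p : Fin n, ∑ i, Jac φ x j i * Jac ψ (φ x) i p = if j = p then 1 else 0 := by
    intro j p
    have h := jac_inverse hφ hψ hφψ (φ x) j p
    rwa [hψφ x] at h
  -- fib of the chosen direction
  have hfibw : fib a φ t x dvec = Pi.single l (dtdT a t) := by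
    funext j
    show (∑ i, Jac φ x j i * dvec i) * dtdT a t = _
    simp only [hdvec]
    rw [hJJψ j l, Pi.single_apply]
    split <;> simp
  -- collapse of ψ-Jacobian against fib
  have hJfib : ∀ m : Fin n, ∑ j, Jac ψ (φ x) m j * fib a φ t x v j = v m * dtdT a t := by
    intro m
    simp only [fib]
    calc ∑ j, Jac ψ (φ x) m j * ((∑ p, Jac φ x j p * v p) * dtdT a t)
        = ∑ j, ∑ p, Jac ψ (φ x) m j * Jac φ x j p * (v p * dtdT a t) := by
          refine Finset.sum_congr rfl fun j _ => ?_
          have h : Jac ψ (φ x) m j * ((∑ p, Jac φ x j p * v p) * dtdT a t)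
              = (∑ p, Jac φ x j p * v p) * (Jac ψ (φ x) m j * dtdT a t) := by ring
          rw [h, Finset.sum_mul]
          exact Finset.sum_congr rfl fun p _ => by ring
      _ = ∑ p, ∑ j, Jac ψ (φ x) m j * Jac φ x j p * (v p * dtdT a t) := Finset.sum_comm
      _ = ∑ p, (∑ j, Jac ψ (φ x) m j * Jac φ x j p) * (v p * dtdT a t) := by
          exact Finset.sum_congr rfl fun p _ => (Finset.sum_mul _ _ _).symm
      _ = ∑ p, (if m = p then 1 else 0) * (v p * dtdT a t) :=
          Finset.sum_congr rfl fun p _ => by rw [hJψJ m p]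
      _ = v m * dtdT a t := by simp
  -- derivative of the left-hand side
  have hsum : (∑ j, (Pi.single l (dtdT a t) : Fin n → ℝ) j
        * pd (fun u => Gt (a t) (φ x) u k) (fib a φ t x v) j)
      = dtdT a t * pd (fun u => Gt (a t) (φ x) u k) (fib a φ t x v) l := by
    simp [Pi.single_apply, ite_mul]
  have hd1 : HasDerivAt (fun s : ℝ => 2 * Gt (a t) (φ x) (fib a φ t x (v + s • dvec)) k)
      (2 * (dtdT a t * pd (fun u => Gt (a t) (φ x) u k) (fib a φ t x v) l)) 0 := by
    have h2 : HasDerivAt (fun s : ℝ => Gt (a t) (φ x) (fib a φ t x (v + s • dvec)) k)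
        (dtdT a t * pd (fun u => Gt (a t) (φ x) u k) (fib a φ t x v) l) 0 := by
      rw [show (fun s : ℝ => Gt (a t) (φ x) (fib a φ t x (v + s • dvec)) k)
          = fun s : ℝ => Gt (a t) (φ x)
              (fib a φ t x v + s • (Pi.single l (dtdT a t) : Fin n → ℝ)) k from
        funext fun s => by rw [fib_add_smul, hfibw], ← hsum]
      exact hasDerivAt_line (hGtslice _)
    exact h2.const_mul 2
  -- derivative of the first right-hand term
  have hdA : HasDerivAt (fun s : ℝ =>
        2 * (∑ j, G t x (v + s • dvec) j * dtdT a t ^ 2 * Jac φ x k j))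
      (2 * (∑ j, (∑ i, dvec i * pd (fun u => G t x u j) v i) * dtdT a t ^ 2 * Jac φ x k j))
      0 := by
    refine HasDerivAt.const_mul 2 (HasDerivAt.fun_sum fun j _ => ?_)
    exact ((hasDerivAt_line ((hGslice j) v)).mul_const _).mul_const _
  -- linearity of the spatial partial of fib
  have hPlin : ∀ (m : Fin n) (s : ℝ), pd (fun y => fib a φ t y (v + s • dvec) k) x m
      = pd (fun y => fib a φ t y v k) x m
        + s * ((∑ i, pd (fun y => Jac φ y k i) x m * dvec i) * dtdT a t) := by
    intro m s
    rw [P_formula hφ, P_formula hφ]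
    have h : ∑ i, pd (fun y => Jac φ y k i) x m * (v + s • dvec) i
        = (∑ i, pd (fun y => Jac φ y k i) x m * v i)
          + s * ∑ i, pd (fun y => Jac φ y k i) x m * dvec i := by
      rw [Finset.mul_sum, ← Finset.sum_add_distrib]
      refine Finset.sum_congr rfl fun i _ => ?_
      simp only [Pi.add_apply, Pi.smul_apply, smul_eq_mul]; ring
    rw [h]; ring
  have hfibs : ∀ (j : Fin n) (s : ℝ), fib a φ t x (v + s • dvec) j
      = fib a φ t x v j + s * (Pi.single l (dtdT a t) : Fin n → ℝ) j := by
    intro j s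
    rw [fib_add_smul, hfibw]
    simp
  -- derivative of the double-sum term
  have hB : ∀ j m : Fin n, HasDerivAt
      (fun s : ℝ => Jac ψ (φ x) m j * pd (fun y => fib a φ t y (v + s • dvec) k) x m
        * fib a φ t x (v + s • dvec) j)
      (Jac ψ (φ x) m j * ((∑ i, pd (fun y => Jac φ y k i) x m * dvec i) * dtdT a t)
          * fib a φ t x v j
        + Jac ψ (φ x) m j * pd (fun y => fib a φ t y v k) x m
          * (Pi.single l (dtdT a t) : Fin n → ℝ) j) 0 := by
    intro j m
    rw [show (fun s : ℝ => Jac ψ (φ x) m j * pd (fun y => fib a φ t y (v + s • dvec) k) x m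
        * fib a φ t x (v + s • dvec) j)
        = fun s : ℝ => (Jac ψ (φ x) m j * (pd (fun y => fib a φ t y v k) x m
            + s * ((∑ i, pd (fun y => Jac φ y k i) x m * dvec i) * dtdT a t)))
          * (fib a φ t x v j + s * (Pi.single l (dtdT a t) : Fin n → ℝ) j) from
      funext fun s => by rw [hPlin m s, hfibs j s]]
    have h1 : HasDerivAt (fun s : ℝ => Jac ψ (φ x) m j * (pd (fun y => fib a φ t y v k) x m
        + s * ((∑ i, pd (fun y => Jac φ y k i) x m * dvec i) * dtdT a t)))
        (Jac ψ (φ x) m j * ((∑ i, pd (fun y => Jac φ y k i) x m * dvec i) * dtdT a t)) 0 := by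
      have := (((hasDerivAt_id (0:ℝ)).mul_const
          ((∑ i, pd (fun y => Jac φ y k i) x m * dvec i) * dtdT a t)).const_add
        (pd (fun y => fib a φ t y v k) x m)).const_mul (Jac ψ (φ x) m j)
      simpa using this
    have h2 : HasDerivAt (fun s : ℝ => fib a φ t x v j
        + s * (Pi.single l (dtdT a t) : Fin n → ℝ) j)
        ((Pi.single l (dtdT a t) : Fin n → ℝ) j) 0 := by
      have := ((hasDerivAt_id (0:ℝ)).mul_const
          ((Pi.single l (dtdT a t) : Fin n → ℝ) j)).const_add (fib a φ t x v j)
      simpa using this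
    have h3 := h1.fun_mul h2
    simpa using h3
  have hdB : HasDerivAt (fun s : ℝ =>
      ∑ j, ∑ m, Jac ψ (φ x) m j * pd (fun y => fib a φ t y (v + s • dvec) k) x m
        * fib a φ t x (v + s • dvec) j)
      (∑ j, ∑ m, (Jac ψ (φ x) m j
            * ((∑ i, pd (fun y => Jac φ y k i) x m * dvec i) * dtdT a t)
          * fib a φ t x v j
        + Jac ψ (φ x) m j * pd (fun y => fib a φ t y v k) x m
          * (Pi.single l (dtdT a t) : Fin n → ℝ) j)) 0 :=
    HasDerivAt.fun_sum fun j _ => HasDerivAt.fun_sum fun m _ => hB j m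
  -- equate the derivatives
  have hEq : (fun s : ℝ => 2 * Gt (a t) (φ x) (fib a φ t x (v + s • dvec)) k)
      = (fun s : ℝ => 2 * (∑ j, G t x (v + s • dvec) j * dtdT a t ^ 2 * Jac φ x k j)
          - ∑ j, ∑ m, Jac ψ (φ x) m j * pd (fun y => fib a φ t y (v + s • dvec) k) x m
              * fib a φ t x (v + s • dvec) j) :=
    funext fun s => hlaw t x (v + s • dvec) k
  rw [hEq] at hd1
  have hkey := hd1.unique (hdA.sub hdB)
  -- algebraic identities for the pieces
  have hSA : (∑ j, (∑ i, dvec i * pd (fun u => G t x u j) v i) * dtdT a t ^ 2 * Jac φ x k j)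
      = dtdT a t * ∑ j, ∑ i, pd (fun u => G t x u j) v i * dtdT a t
          * Jac ψ (φ x) i l * Jac φ x k j := by
    rw [Finset.mul_sum]
    refine Finset.sum_congr rfl fun j _ => ?_
    have h : (∑ i, dvec i * pd (fun u => G t x u j) v i) * dtdT a t ^ 2 * Jac φ x k j
        = (∑ i, dvec i * pd (fun u => G t x u j) v i)
            * (dtdT a t ^ 2 * Jac φ x k j) := by ring
    rw [h, Finset.sum_mul, Finset.mul_sum]
    refine Finset.sum_congr rfl fun i _ => ?_
    simp only [hdvec]
    ring
  have hsplit : (∑ j, ∑ m : Fin n, (Jac ψ (φ x) m j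
            * ((∑ i, pd (fun y => Jac φ y k i) x m * dvec i) * dtdT a t)
          * fib a φ t x v j
        + Jac ψ (φ x) m j * pd (fun y => fib a φ t y v k) x m
          * (Pi.single l (dtdT a t) : Fin n → ℝ) j))
      = (∑ j, ∑ m, Jac ψ (φ x) m j
            * ((∑ i, pd (fun y => Jac φ y k i) x m * dvec i) * dtdT a t)
          * fib a φ t x v j)
        + ∑ j, ∑ m, Jac ψ (φ x) m j * pd (fun y => fib a φ t y v k) x m
          * (Pi.single l (dtdT a t) : Fin n → ℝ) j := by
    rw [← Finset.sum_add_distrib]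
    exact Finset.sum_congr rfl fun j _ => Finset.sum_add_distrib
  have hSB2 : (∑ j, ∑ m, Jac ψ (φ x) m j * pd (fun y => fib a φ t y v k) x m
        * (Pi.single l (dtdT a t) : Fin n → ℝ) j)
      = dtdT a t * ∑ m, Jac ψ (φ x) m l * pd (fun y => fib a φ t y v k) x m := by
    rw [Finset.sum_comm, Finset.mul_sum]
    refine Finset.sum_congr rfl fun m _ => ?_
    simp [Pi.single_apply, mul_ite]
    ring
  have hSB1 : (∑ j, ∑ m, Jac ψ (φ x) m j
        * ((∑ i, pd (fun y => Jac φ y k i) x m * dvec i) * dtdT a t)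
        * fib a φ t x v j)
      = dtdT a t * ∑ m, Jac ψ (φ x) m l * pd (fun y => fib a φ t y v k) x m := by
    calc (∑ j, ∑ m, Jac ψ (φ x) m j
          * ((∑ i, pd (fun y => Jac φ y k i) x m * dvec i) * dtdT a t)
          * fib a φ t x v j)
        = ∑ m, ∑ j, Jac ψ (φ x) m j
          * ((∑ i, pd (fun y => Jac φ y k i) x m * dvec i) * dtdT a t)
          * fib a φ t x v j := Finset.sum_comm
      _ = ∑ m, ((∑ i, pd (fun y => Jac φ y k i) x m * dvec i) * dtdT a t)
          * (v m * dtdT a t) := by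
          refine Finset.sum_congr rfl fun m _ => ?_
          have h : ∀ j, Jac ψ (φ x) m j
              * ((∑ i, pd (fun y => Jac φ y k i) x m * dvec i) * dtdT a t)
              * fib a φ t x v j
              = (Jac ψ (φ x) m j * fib a φ t x v j)
                * ((∑ i, pd (fun y => Jac φ y k i) x m * dvec i) * dtdT a t) :=
            fun j => by ring
          rw [Finset.sum_congr rfl fun j _ => h j, ← Finset.sum_mul, hJfib m]
          ring
      _ = ∑ m, ∑ i, pd (fun y => Jac φ y k i) x m * Jac ψ (φ x) i l
          * (v m * dtdT a t * dtdT a t) := by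
          refine Finset.sum_congr rfl fun m _ => ?_
          have h : ((∑ i, pd (fun y => Jac φ y k i) x m * dvec i) * dtdT a t)
              * (v m * dtdT a t)
              = (∑ i, pd (fun y => Jac φ y k i) x m * dvec i)
                * (v m * dtdT a t * dtdT a t) := by ring
          rw [h, Finset.sum_mul]
      _ = ∑ i, ∑ m, pd (fun y => Jac φ y k i) x m * Jac ψ (φ x) i l
          * (v m * dtdT a t * dtdT a t) := Finset.sum_comm
      _ = ∑ i, ∑ m, pd (fun y => Jac φ y k m) x i * Jac ψ (φ x) i l
          * (v m * dtdT a t * dtdT a t) := by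
          refine Finset.sum_congr rfl fun i _ => Finset.sum_congr rfl fun m _ => ?_
          rw [Q_symm hφ x k m i]
      _ = dtdT a t * ∑ m, Jac ψ (φ x) m l * pd (fun y => fib a φ t y v k) x m := by
          rw [Finset.mul_sum]
          refine Finset.sum_congr rfl fun i _ => ?_
          rw [P_formula hφ]
          have h : dtdT a t * (Jac ψ (φ x) i l
              * ((∑ m, pd (fun y => Jac φ y k m) x i * v m) * dtdT a t))
              = (∑ m, pd (fun y => Jac φ y k m) x i * v m)
                * (Jac ψ (φ x) i l * (dtdT a t * dtdT a t)) := by ring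
          rw [h, Finset.sum_mul]
          refine Finset.sum_congr rfl fun m _ => ?_
          ring
  -- finish
  rw [hSA, hsplit, hSB1, hSB2] at hkey
  have h2D : (2 : ℝ) * dtdT a t ≠ 0 := mul_ne_zero two_ne_zero hDne
  apply mul_left_cancel₀ h2D
  linear_combination hkey
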